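/- Fix n ≥ 1. Let A_1 be the 2n×2n real matrix with entries (A_1)_{2k−1,2k} = (A_1)_{2k,2k−1} = 1 for 1 ≤ k ≤ n, (A_1)_{2k,2k+1} = (A_1)_{2k+1,2k} = −1 for 1 ≤ k ≤ n−1, and 0 elsewhere; let D = diag(1,−1,1,…,−1) of size 2n, and for k ≥ 1 let A_{k+1} = A_1 ⊗ I_{(2n)^k} + D ⊗ A_k. Then for every k ≥ 1: (i) A_k is invertible (0 is not an eigenvalue of A_k); (ii) if λ is an eigenvalue of A_k then so is −λ. -/

import Mathlib

/-!
Let `A = A_1`. The sign matrix `D` is an involution anticommuting with `A`, so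
`(A ⊗ 1 + D ⊗ A_k)² = A² ⊗ 1 + 1 ⊗ A_k²`, which is positive definite when `A` is invertible and
`A_k` is symmetric: invertibility of all `A_k` reduces to that of `A`. Along the path, `A x = 0`
reads `x_1 = 0` and `x_m = x_{m+2}` (0-indexed, `x_{2n} = 0`), so the odd coordinates vanish from
the start of the path and the even ones from its end.

If `S` is an involution anticommuting with `A_k`, then `D ⊗ S` is one for `A_{k+1}`; such an
involution maps `λ`-eigenvectors to `(-λ)`-eigenvectors.
-/

open Kronecker Matrix

/-- A matrix `M` has real eigenvalue `μ` if `M x = μ x` for some nonzero vector `x`. -/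
def HasEig {I : Type*} [Fintype I] (M : Matrix I I ℝ) (μ : ℝ) : Prop :=
  ∃ x : I → ℝ, x ≠ 0 ∧ M.mulVec x = μ • x

/-- The signed adjacency matrix `A_1` of the path `P_{2n}`: in 1-indexed terms,
`(A_1)_{2k−1,2k} = (A_1)_{2k,2k−1} = 1` for `1 ≤ k ≤ n` and
`(A_1)_{2k,2k+1} = (A_1)_{2k+1,2k} = −1` for `1 ≤ k ≤ n−1`, zero elsewhere.
On the 0-indexed `Fin (2n)`, the entry at `(i, i+1)` is `1` when `i` is even and
`−1` when `i` is odd. -/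
def signedPath (n : ℕ) : Matrix (Fin (2 * n)) (Fin (2 * n)) ℝ :=
  Matrix.of fun i j =>
    if (i : ℕ) + 1 = (j : ℕ) then (if (i : ℕ) % 2 = 0 then 1 else -1)
    else if (j : ℕ) + 1 = (i : ℕ) then (if (j : ℕ) % 2 = 0 then 1 else -1)
    else 0

/-- `D = diag(1, −1, 1, …, −1)` of size `2n`. -/
def altDiag (n : ℕ) : Matrix (Fin (2 * n)) (Fin (2 * n)) ℝ :=
  Matrix.diagonal fun i => if (i : ℕ) % 2 = 0 then 1 else -1

/-- The signed adjacency matrices of `P_{2n}^k`: `APn n 0 = A_1` and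
`APn n (k+1) = A_1 ⊗ I_{(2n)^(k+1)} + D ⊗ APn n k` (Kronecker products), so
`APn n k` is the matrix `A_{k+1}` of the paper; it is indexed by
`Fin (k+1) → Fin (2n)`, a type of cardinality `(2n)^(k+1)`. -/
noncomputable def APn (n : ℕ) :
    (k : ℕ) → Matrix (Fin (k + 1) → Fin (2 * n)) (Fin (k + 1) → Fin (2 * n)) ℝ
  | 0 => Matrix.reindex (Equiv.funUnique (Fin 1) (Fin (2 * n))).symm
      (Equiv.funUnique (Fin 1) (Fin (2 * n))).symm (signedPath n)
  | (k + 1) =>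
      Matrix.reindex (Fin.consEquiv fun _ : Fin (k + 2) => Fin (2 * n))
        (Fin.consEquiv fun _ : Fin (k + 2) => Fin (2 * n))
        (signedPath n ⊗ₖ
            (1 : Matrix (Fin (k + 1) → Fin (2 * n)) (Fin (k + 1) → Fin (2 * n)) ℝ)
          + altDiag n ⊗ₖ APn n k)

structure IsAnticommutingInvolution {R : Type*} [Semiring R] (S M : R) : Prop where
  mul_self : S * S = 1
  anticomm : S * M + M * S = 0

namespace IsAnticommutingInvolution

theorem map {R R' F : Type*} [Semiring R] [Semiring R'] [FunLike F R R'] [RingHomClass F R R']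
    {S M : R} (h : IsAnticommutingInvolution S M) (f : F) :
    IsAnticommutingInvolution (f S) (f M) where
  mul_self := by rw [← map_mul, h.mul_self, map_one]
  anticomm := by rw [← map_mul, ← map_mul, ← map_add, h.anticomm, map_zero]

end IsAnticommutingInvolution

theorem Matrix.IsHermitian.kronecker {R ι κ : Type*} [CommSemiring R] [StarRing R]
    {A : Matrix ι ι R} {M : Matrix κ κ R} (hA : A.IsHermitian) (hM : M.IsHermitian) :
    (A ⊗ₖ M).IsHermitian := by
  rw [IsHermitian, conjTranspose_kronecker, hA.eq, hM.eq]

section Kronecker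

variable {R ι κ : Type*} [CommRing R] [Fintype ι] [Fintype κ] [DecidableEq ι] [DecidableEq κ]
  {A D : Matrix ι ι R} {M S : Matrix κ κ R}

theorem kronecker_one_add_kronecker_mul_self (hDA : IsAnticommutingInvolution D A) :
    (A ⊗ₖ (1 : Matrix κ κ R) + D ⊗ₖ M) * (A ⊗ₖ 1 + D ⊗ₖ M) = (A * A) ⊗ₖ 1 + 1 ⊗ₖ (M * M) := by
  have hcross : (A * D) ⊗ₖ M + (D * A) ⊗ₖ M = 0 := by
    rw [← add_kronecker, add_comm, hDA.anticomm, zero_kronecker]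
  simp only [add_mul, mul_add, ← mul_kronecker_mul, Matrix.mul_one, Matrix.one_mul, hDA.mul_self]
  rw [add_add_add_comm, add_assoc, ← add_assoc ((A * D) ⊗ₖ M), hcross, zero_add]

theorem IsAnticommutingInvolution.kronecker (hDA : IsAnticommutingInvolution D A)
    (hSM : IsAnticommutingInvolution S M) :
    IsAnticommutingInvolution (D ⊗ₖ S) (A ⊗ₖ 1 + D ⊗ₖ M) where
  mul_self := by rw [← mul_kronecker_mul, hDA.mul_self, hSM.mul_self, one_kronecker_one]
  anticomm := by
    simp only [add_mul, mul_add, ← mul_kronecker_mul, Matrix.mul_one, Matrix.one_mul,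
      hDA.mul_self]
    rw [add_add_add_comm, ← add_kronecker, hDA.anticomm, zero_kronecker, zero_add,
      ← kronecker_add, hSM.anticomm, kronecker_zero]

end Kronecker

section PositiveDefinite

open scoped ComplexOrder

variable {𝕜 ι κ : Type*} [RCLike 𝕜] [Fintype ι] [Fintype κ] [DecidableEq ι] [DecidableEq κ]
  {A D : Matrix ι ι 𝕜} {M : Matrix κ κ 𝕜}

theorem Matrix.IsHermitian.posDef_mul_self (hA : A.IsHermitian) (hAu : IsUnit A) :
    (A * A).PosDef := by
  simpa only [hA.eq] using PosDef.conjTranspose_mul_self A (mulVec_injective_of_isUnit hAu)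

theorem isUnit_kronecker_one_add_kronecker (hA : A.IsHermitian) (hAu : IsUnit A)
    (hM : M.IsHermitian) (hDA : IsAnticommutingInvolution D A) :
    IsUnit (A ⊗ₖ (1 : Matrix κ κ 𝕜) + D ⊗ₖ M) := by
  have hsq : (A ⊗ₖ (1 : Matrix κ κ 𝕜) + D ⊗ₖ M) * (A ⊗ₖ 1 + D ⊗ₖ M) |>.PosDef := by
    rw [kronecker_one_add_kronecker_mul_self hDA]
    refine (hA.posDef_mul_self hAu |>.kronecker .one).add_posSemidef (PosSemidef.one.kronecker ?_)
    simpa only [hM.eq] using posSemidef_conjTranspose_mul_self M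
  exact isUnit_of_mul_isUnit_left hsq.isUnit

end PositiveDefinite

section Eigenvalues

variable {ι : Type*} [Fintype ι] [DecidableEq ι] {M S : Matrix ι ι ℝ}

theorem not_hasEig_zero_of_isUnit (hM : IsUnit M) : ¬ HasEig M 0 := fun ⟨x, hx, hMx⟩ =>
  hx (mulVec_injective_of_isUnit hM (by rw [hMx, zero_smul, mulVec_zero]))

theorem IsAnticommutingInvolution.hasEig_neg (hSM : IsAnticommutingInvolution S M) {μ : ℝ}
    (hμ : HasEig M μ) : HasEig M (-μ) := by
  obtain ⟨x, hx, hMx⟩ := hμ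
  refine ⟨S *ᵥ x, fun hSx => hx ?_, ?_⟩
  · rw [← one_mulVec x, ← hSM.mul_self, ← mulVec_mulVec, hSx, mulVec_zero]
  · rw [mulVec_mulVec, eq_neg_of_add_eq_zero_right hSM.anticomm, neg_mulVec, ← mulVec_mulVec,
      hMx, mulVec_smul, neg_smul]

end Eigenvalues

section SignedPath

variable (n : ℕ)

theorem signedPath_isHermitian : (signedPath n).IsHermitian := by
  ext i j
  simp only [conjTranspose_apply, star_trivial, signedPath, of_apply]
  split_ifs <;> first | rfl | omega

theorem altDiag_isHermitian : (altDiag n).IsHermitian :=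
  isHermitian_diagonal _

theorem isAnticommutingInvolution_altDiag_signedPath :
    IsAnticommutingInvolution (altDiag n) (signedPath n) where
  mul_self := by
    rw [altDiag, diagonal_mul_diagonal, ← diagonal_one]
    congr 1
    ext i
    split_ifs <;> norm_num
  anticomm := by
    ext i j
    simp only [altDiag, Matrix.add_apply, diagonal_mul, mul_diagonal, signedPath, of_apply,
      Matrix.zero_apply]
    split_ifs <;> first | omega | norm_num

variable {n}

theorem signedPath_mulVec_apply (x : Fin (2 * n) → ℝ) (i : Fin (2 * n)) :
    (signedPath n *ᵥ x) i = ∑ c ∈ Finset.range (2 * n),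
      (if (i : ℕ) + 1 = c then (if (i : ℕ) % 2 = 0 then 1 else -1)
        else if c + 1 = i then (if c % 2 = 0 then 1 else -1) else 0) *
      Function.extend Fin.val x 0 c := by
  rw [← Fin.sum_univ_eq_sum_range]
  simp only [mulVec, dotProduct, Fin.val_injective.extend_apply]
  rfl

theorem signedPath_mulVec_zero (x : Fin (2 * n) → ℝ) (h : 0 < 2 * n) :
    (signedPath n *ᵥ x) ⟨0, h⟩ = Function.extend Fin.val x 0 1 := by
  rw [signedPath_mulVec_apply, Finset.sum_eq_single 1]
  · simp
  · intro c _ hc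
    simp [Ne.symm hc]
  · intro h1
    rw [Function.extend_apply' _ _ _ fun ⟨j, hj⟩ => h1 (by simp [← hj])]
    simp

theorem signedPath_mulVec_succ (x : Fin (2 * n) → ℝ) (m : ℕ) (hm : m + 1 < 2 * n) :
    (signedPath n *ᵥ x) ⟨m + 1, hm⟩ =
      (-1) ^ m * (Function.extend Fin.val x 0 m - Function.extend Fin.val x 0 (m + 2)) := by
  rw [signedPath_mulVec_apply, Finset.sum_eq_add m (m + 2) (by omega)]
  · simp only [show m + 1 + 1 ≠ m by omega, ↓reduceIte]
    split_ifs with h0 h1 h1 <;> try omega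
    · rw [(Nat.even_iff.mpr h0).neg_one_pow]; ring
    · rw [(Nat.odd_iff.mpr (by omega)).neg_one_pow]; ring
  · intro c _ hc
    simp only
    rw [if_neg (by omega), if_neg (by omega), zero_mul]
  · exact fun h => absurd (Finset.mem_range.mpr (by omega)) h
  · intro h2
    rw [Function.extend_apply' _ _ _ fun ⟨j, hj⟩ => h2 (by simp [← hj])]
    simp

theorem signedPath_mulVec_injective : Function.Injective (signedPath n).mulVec := by
  refine (injective_iff_map_eq_zero (signedPath n).mulVecLin).2 fun x hx => ?_
  set X := Function.extend Fin.val x 0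
  have hrow (i : Fin (2 * n)) : (signedPath n *ᵥ x) i = 0 := congrFun hx i
  have hout (m : ℕ) (hm : 2 * n ≤ m) : X m = 0 :=
    Function.extend_apply' _ _ _ fun ⟨j, hj⟩ => by omega
  have hstep (m : ℕ) (hm : m + 1 < 2 * n) : X m = X (m + 2) := by
    have h := hrow ⟨m + 1, hm⟩
    rw [signedPath_mulVec_succ, mul_eq_zero, sub_eq_zero] at h
    exact h.resolve_left (pow_ne_zero _ (by norm_num))
  have hodd (t : ℕ) : X (2 * t + 1) = 0 := by
    induction t with
    | zero =>
      by_cases hn : 0 < 2 * n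
      · exact (signedPath_mulVec_zero x hn).symm.trans (hrow _)
      · exact hout _ (by omega)
    | succ t ih =>
      by_cases ht : 2 * t + 2 < 2 * n
      · rw [← ih, hstep _ ht]
        rfl
      · exact hout _ (by omega)
  have heven (t : ℕ) : X (2 * n - 2 * t) = 0 := by
    induction t with
    | zero => exact hout _ (by omega)
    | succ t ih =>
      by_cases ht : t < n
      · rw [← ih, hstep _ (by omega)]
        congr 1
        omega
      · rwa [show 2 * n - 2 * (t + 1) = 2 * n - 2 * t by omega]
  ext i
  rw [Pi.zero_apply, ← Fin.val_injective.extend_apply x 0 i]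
  rcases Nat.even_or_odd' i with ⟨t, hi | hi⟩
  · rw [hi, show 2 * t = 2 * n - 2 * (n - t) by omega]
    exact heven _
  · rw [hi]
    exact hodd t

theorem isUnit_signedPath : IsUnit (signedPath n) :=
  mulVec_injective_iff_isUnit.mp signedPath_mulVec_injective

end SignedPath

section APn

variable (n : ℕ)

theorem isHermitian_APn (k : ℕ) : (APn n k).IsHermitian := by
  induction k with
  | zero => exact (signedPath_isHermitian n).submatrix _
  | succ k ih =>
    exact (((signedPath_isHermitian n).kronecker isHermitian_one).add
      ((altDiag_isHermitian n).kronecker ih)).submatrix _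

theorem isUnit_APn : ∀ k, IsUnit (APn n k)
  | 0 => isUnit_signedPath.map (reindexAlgEquiv ℝ ℝ _)
  | k + 1 =>
    (isUnit_kronecker_one_add_kronecker (signedPath_isHermitian n) isUnit_signedPath
      (isHermitian_APn n k) (isAnticommutingInvolution_altDiag_signedPath n)).map
      (reindexAlgEquiv ℝ ℝ _)

theorem exists_isAnticommutingInvolution_APn (k : ℕ) :
    ∃ S, IsAnticommutingInvolution S (APn n k) := by
  induction k with
  | zero =>
    exact ⟨_, (isAnticommutingInvolution_altDiag_signedPath n).map (reindexAlgEquiv ℝ ℝ _)⟩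
  | succ k ih =>
    obtain ⟨S, hS⟩ := ih
    exact ⟨_, ((isAnticommutingInvolution_altDiag_signedPath n).kronecker hS).map
      (reindexAlgEquiv ℝ ℝ _)⟩

end APn

theorem APn_invertible_and_symm_general (n : ℕ) (k : ℕ) :
    (IsUnit (APn n k) ∧ ¬ HasEig (APn n k) 0) ∧
    (∀ lam : ℝ, HasEig (APn n k) lam → HasEig (APn n k) (-lam)) := by
  obtain ⟨S, hS⟩ := exists_isAnticommutingInvolution_APn n k
  exact ⟨⟨isUnit_APn n k, not_hasEig_zero_of_isUnit (isUnit_APn n k)⟩, fun _ => hS.hasEig_neg⟩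

/-- Fix `n ≥ 1`. For every `k ≥ 1` (here `APn n k` is the paper's `A_{k+1}`, `k : ℕ`):
(i) `A_k` is invertible (`0` is not an eigenvalue); (ii) if `λ` is an eigenvalue of
`A_k` then so is `−λ`. -/
theorem APn_invertible_and_symm (n : ℕ) (hn : 1 ≤ n) (k : ℕ) :
    (IsUnit (APn n k) ∧ ¬ HasEig (APn n k) 0) ∧
    (∀ lam : ℝ, HasEig (APn n k) lam → HasEig (APn n k) (-lam)) :=
  APn_invertible_and_symm_general n k
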